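/- Let U, V ⊆ ℝⁿ be open and φ : V → U a C^∞ diffeomorphism with inverse ψ = φ⁻¹. Let Δ be a second-order differential operator on C^∞(U) with smooth coefficients S^{ab} = S^{ba}, T^a, R, let Δ' be its pullback to V with coefficients S'^{kl}, T'^k, R', and set γ^a := Σ_b ∂_b S^{ba} − 2T^a on U and γ'^k := Σ_l ∂_l S'^{lk} − 2T'^k on V. Then the subprincipal symbol transforms as an upper connection in the bundle of volume forms: for all y ∈ V, γ'^k(y) = Σ_a [ γ^a(φ(y)) + Σ_b S^{ab}(φ(y)) · ∂_b( ln|det Dψ| )(φ(y)) ] · (∂_a ψ^k)(φ(y)), where Dψ denotes the Jacobian matrix of ψ. -/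

import Mathlib

open scoped BigOperators

/-- Partial derivative `∂_a f` of a function on `ℝⁿ`. -/
noncomputable def pd {n : ℕ} (a : Fin n) (f : (Fin n → ℝ) → ℝ) : (Fin n → ℝ) → ℝ :=
  fun x => fderiv ℝ f x (Pi.single a 1)

/-- The second-order differential operator
`Δf = (1/2)·Σ_{a,b} S^{ab} ∂_a∂_b f + Σ_a T^a ∂_a f + R·f`. -/
noncomputable def secondOrderOp {n : ℕ} (S : Fin n → Fin n → (Fin n → ℝ) → ℝ)
    (T : Fin n → (Fin n → ℝ) → ℝ) (R : (Fin n → ℝ) → ℝ)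
    (f : (Fin n → ℝ) → ℝ) : (Fin n → ℝ) → ℝ :=
  fun x => (1/2) * (∑ a, ∑ b, S a b x * pd a (pd b f) x)
    + (∑ a, T a x * pd a f x) + R x * f x

/-- The Jacobian matrix `(∂_j ψ^i)` of a map `ψ : ℝⁿ → ℝⁿ` at a point. -/
noncomputable def jacobian {n : ℕ} (ψ : (Fin n → ℝ) → (Fin n → ℝ)) (x : Fin n → ℝ) :
    Matrix (Fin n) (Fin n) ℝ :=
  Matrix.of fun i j => pd j (fun z => ψ z i) x

/-- The subprincipal symbol components `γ^a := Σ_b ∂_b S^{ba} − 2T^a`. -/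
noncomputable def subSymbol {n : ℕ} (S : Fin n → Fin n → (Fin n → ℝ) → ℝ)
    (T : Fin n → (Fin n → ℝ) → ℝ) (a : Fin n) : (Fin n → ℝ) → ℝ :=
  fun x => (∑ b, pd b (S b a) x) - 2 * T a x

/-!
Testing the identity `Δ(g ∘ ψ) ∘ φ = Δ'g` against `g = 1`, `g = y_k` and `g = y_k y_l` identifies
the coefficients of the pullback: `R' = R ∘ φ`, `T'^k = (Δψ^k - R ψ^k) ∘ φ` and
`S'^{kl} = (S^{ab} ∂_aψ^k ∂_bψ^l) ∘ φ`. Hence `Σ_l ∂_l S'^{lk}` is the divergence of the pullback of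
the vector field `X^a = S^{ab} ∂_bψ^k`. Since `Dφ = (Dψ)⁻¹ ∘ φ`, the chain rule and the symmetry of
second derivatives turn the divergence of a pulled back field into `(div X + X(ln |det Dψ|)) ∘ φ`,
the logarithmic derivative of `det Dψ` being `tr((Dψ)⁻¹ ∂Dψ)` by Jacobi's formula. Expanding
`div X`, its second derivatives of `ψ^k` cancel against those in `-2T'^k`.
-/

open Filter Topology

section PartialDerivative

variable {n : ℕ} {f g : (Fin n → ℝ) → ℝ} {x : Fin n → ℝ}

theorem pd_congr (h : f =ᶠ[𝓝 x] g) (a : Fin n) : pd a f x = pd a g x := by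
  simp only [pd, h.fderiv_eq]

theorem HasFDerivAt.pd_eq {L : (Fin n → ℝ) →L[ℝ] ℝ} (h : HasFDerivAt f L x) (a : Fin n) :
    pd a f x = L (Pi.single a 1) := by
  rw [pd, h.fderiv]

theorem pd_const (c : ℝ) (a : Fin n) : pd a (fun _ : Fin n → ℝ => c) = fun _ => 0 := by
  ext
  simp [pd]

theorem pd_coord (k a : Fin n) :
    pd a (fun y : Fin n → ℝ => y k) = fun _ => if a = k then 1 else 0 := by
  ext x
  simp [(hasFDerivAt_apply k x).pd_eq, Pi.single_apply, eq_comm]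

theorem pd_add (hf : DifferentiableAt ℝ f x) (hg : DifferentiableAt ℝ g x) (a : Fin n) :
    pd a (fun z => f z + g z) x = pd a f x + pd a g x :=
  (hf.hasFDerivAt.add hg.hasFDerivAt).pd_eq a

theorem pd_mul (hf : DifferentiableAt ℝ f x) (hg : DifferentiableAt ℝ g x) (a : Fin n) :
    pd a (fun z => f z * g z) x = pd a f x * g x + f x * pd a g x := by
  rw [(hf.hasFDerivAt.fun_mul hg.hasFDerivAt).pd_eq]
  simp [pd]
  ring

theorem pd_sum {ι : Type*} {s : Finset ι} {F : ι → (Fin n → ℝ) → ℝ}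
    (h : ∀ i ∈ s, DifferentiableAt ℝ (F i) x) (a : Fin n) :
    pd a (fun z => ∑ i ∈ s, F i z) x = ∑ i ∈ s, pd a (F i) x := by
  rw [(HasFDerivAt.fun_sum fun i hi => (h i hi).hasFDerivAt).pd_eq]
  simp [pd]

theorem pd_comp {φ : (Fin n → ℝ) → Fin n → ℝ} {F : (Fin n → ℝ) → ℝ} {y : Fin n → ℝ}
    (hF : DifferentiableAt ℝ F (φ y)) (hφ : DifferentiableAt ℝ φ y) (l : Fin n) :
    pd l (fun z => F (φ z)) y = ∑ c, pd c F (φ y) * pd l (fun z => φ z c) y := by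
  have hcoord (c : Fin n) : pd l (fun z => φ z c) y = fderiv ℝ φ y (Pi.single l 1) c :=
    (hasFDerivAt_pi'.1 hφ.hasFDerivAt c).pd_eq l
  rw [show (fun z => F (φ z)) = F ∘ φ from rfl, (hF.hasFDerivAt.comp y hφ.hasFDerivAt).pd_eq,
    ContinuousLinearMap.comp_apply]
  conv_lhs => rw [← Finset.univ_sum_single (fderiv ℝ φ y (Pi.single l 1))]
  rw [map_sum]
  refine Finset.sum_congr rfl fun c _ => ?_
  have hsingle : Pi.single c (fderiv ℝ φ y (Pi.single l 1) c)
      = fderiv ℝ φ y (Pi.single l 1) c • (Pi.single c 1 : Fin n → ℝ) := by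
    rw [← Pi.single_smul', smul_eq_mul, mul_one]
  rw [hsingle, map_smul, smul_eq_mul, hcoord, pd, mul_comm]

theorem ContDiffAt.pd {m : WithTop ℕ∞} (hf : ContDiffAt ℝ (m + 1) f x) (a : Fin n) :
    ContDiffAt ℝ m (pd a f) x :=
  show ContDiffAt ℝ m ((· (Pi.single a 1)) ∘ fderiv ℝ f) x from
    (ContinuousLinearMap.apply ℝ ℝ (Pi.single a 1)).contDiff.contDiffAt.comp x
      (hf.fderiv_right le_rfl)

theorem pd_pd_comm (hf : ContDiffAt ℝ 2 f x) (a b : Fin n) :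
    pd a (pd b f) x = pd b (pd a f) x := by
  have hd : DifferentiableAt ℝ (fderiv ℝ f) x :=
    (hf.fderiv_right (m := 1) le_rfl).differentiableAt one_ne_zero
  have hpd (a b : Fin n) :
      pd a (pd b f) x = fderiv ℝ (fderiv ℝ f) x (Pi.single a 1) (Pi.single b 1) :=
    show pd a ((· (Pi.single b 1)) ∘ fderiv ℝ f) x = _ from
      ((ContinuousLinearMap.apply ℝ ℝ (Pi.single b 1)).hasFDerivAt.comp x hd.hasFDerivAt).pd_eq a
  rw [hpd, hpd]
  exact hf.isSymmSndFDerivAt (by simp) _ _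

end PartialDerivative

theorem Matrix.sum_det_updateRow_eq_trace_adjugate_mul {ι R : Type*} [Fintype ι] [DecidableEq ι]
    [CommRing R] (A B : Matrix ι ι R) :
    ∑ i, (A.updateRow i (B i)).det = (A.adjugate * B).trace := by
  simp only [← Matrix.cramer_transpose_apply, Matrix.cramer_eq_adjugate_mulVec, Matrix.mulVec,
    dotProduct, ← Matrix.adjugate_transpose, Matrix.transpose_apply, Matrix.trace,
    Matrix.diag_apply, Matrix.mul_apply]
  exact Finset.sum_comm

section Determinant

variable {n : ℕ}

theorem pd_det {M : (Fin n → ℝ) → Fin n → Fin n → ℝ} {x : Fin n → ℝ}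
    (hM : ∀ i j, DifferentiableAt ℝ (fun z => M z i j) x) (b : Fin n) :
    pd b (fun z => (Matrix.of (M z)).det) x
      = ((Matrix.of (M x)).adjugate * Matrix.of fun i j => pd b (fun z => M z i j) x).trace := by
  -- `det` is multilinear in the rows, so `ContinuousMultilinearMap.hasFDerivAt` applies
  let D : ContinuousMultilinearMap ℝ (fun _ : Fin n => Fin n → ℝ) ℝ :=
    ⟨Matrix.detRowAlternating.toMultilinearMap, continuous_id.matrix_det⟩
  have hMd : DifferentiableAt ℝ M x :=
    differentiableAt_pi.2 fun i => differentiableAt_pi.2 (hM i)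
  have hrow (i : Fin n) : fderiv ℝ M x (Pi.single b 1) i = fun j => pd b (fun z => M z i j) x := by
    funext j
    exact ((hasFDerivAt_pi'.1 (hasFDerivAt_pi'.1 hMd.hasFDerivAt i) j).pd_eq b).symm
  rw [show (fun z => (Matrix.of (M z)).det) = D ∘ M from rfl,
    ((D.hasFDerivAt (M x)).comp x hMd.hasFDerivAt).pd_eq, ContinuousLinearMap.comp_apply,
    ContinuousMultilinearMap.linearDeriv_apply, ← Matrix.sum_det_updateRow_eq_trace_adjugate_mul]
  simp only [hrow]
  rfl

theorem differentiableAt_det {M : (Fin n → ℝ) → Fin n → Fin n → ℝ} {x : Fin n → ℝ}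
    (hM : ∀ i j, DifferentiableAt ℝ (fun z => M z i j) x) :
    DifferentiableAt ℝ (fun z => (Matrix.of (M z)).det) x := by
  simp only [Matrix.det_apply, Matrix.of_apply]
  fun_prop

theorem pd_log_abs_det {M : (Fin n → ℝ) → Fin n → Fin n → ℝ} {x : Fin n → ℝ}
    (hM : ∀ i j, DifferentiableAt ℝ (fun z => M z i j) x) (hdet : (Matrix.of (M x)).det ≠ 0)
    (b : Fin n) :
    pd b (fun z => Real.log |(Matrix.of (M z)).det|) x
      = ((Matrix.of (M x))⁻¹ * Matrix.of fun i j => pd b (fun z => M z i j) x).trace := by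
  simp only [Real.log_abs]
  rw [((differentiableAt_det hM).hasFDerivAt.log hdet).pd_eq, smul_apply,
    smul_eq_mul, ← pd, pd_det hM, Matrix.inv_def, Ring.inverse_eq_inv', Matrix.smul_mul,
    Matrix.trace_smul, smul_eq_mul]

end Determinant

section Jacobian

variable {n : ℕ}

theorem jacobian_congr {f g : (Fin n → ℝ) → Fin n → ℝ} {x : Fin n → ℝ} (h : f =ᶠ[𝓝 x] g) :
    jacobian f x = jacobian g x := by
  ext i j
  exact pd_congr (h.fun_comp (· i)) j

theorem jacobian_id (x : Fin n → ℝ) : jacobian (fun z => z) x = 1 := by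
  ext i j
  simp [jacobian, pd_coord, Matrix.one_apply, eq_comm]

theorem jacobian_comp {f g : (Fin n → ℝ) → Fin n → ℝ} {x : Fin n → ℝ}
    (hf : DifferentiableAt ℝ f (g x)) (hg : DifferentiableAt ℝ g x) :
    jacobian (fun z => f (g z)) x = jacobian f (g x) * jacobian g x := by
  ext i j
  exact pd_comp (differentiableAt_pi.1 hf i) hg j

theorem pd_log_abs_det_jacobian {ψ : (Fin n → ℝ) → Fin n → ℝ} {x : Fin n → ℝ}
    {K : Matrix (Fin n) (Fin n) ℝ} (hψ : ContDiffAt ℝ 2 ψ x) (hinv : jacobian ψ x * K = 1)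
    (a : Fin n) :
    pd a (fun w => Real.log |(jacobian ψ w).det|) x
      = ∑ c, ∑ l, K c l * pd a (pd c (fun w => ψ w l)) x := by
  have hJ (i j : Fin n) : DifferentiableAt ℝ (pd j (fun w => ψ w i)) x :=
    ((contDiffAt_pi.1 hψ i).pd j).differentiableAt one_ne_zero
  have hdet : (jacobian ψ x).det ≠ 0 :=
    left_ne_zero_of_mul_eq_one (by rw [← Matrix.det_mul, hinv, Matrix.det_one])
  refine (pd_log_abs_det (M := fun z i j => pd j (fun w => ψ w i) z) hJ hdet a).trans ?_
  simp only [show (Matrix.of fun i j => pd j (fun w => ψ w i) x) = jacobian ψ x from rfl,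
    Matrix.inv_eq_right_inv hinv, Matrix.trace, Matrix.diag_apply, Matrix.mul_apply,
    Matrix.of_apply]

end Jacobian

section Divergence

variable {n : ℕ}

noncomputable def divergence (X : Fin n → (Fin n → ℝ) → ℝ) (x : Fin n → ℝ) : ℝ :=
  ∑ a, pd a (X a) x

theorem divergence_pullback {φ ψ : (Fin n → ℝ) → Fin n → ℝ} {y : Fin n → ℝ}
    (hφ : DifferentiableAt ℝ φ y) (hψ : ContDiffAt ℝ 2 ψ (φ y))
    (hinv : jacobian ψ (φ y) * jacobian φ y = 1)
    {X : Fin n → (Fin n → ℝ) → ℝ} (hX : ∀ a, DifferentiableAt ℝ (X a) (φ y)) :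
    divergence (fun l z => ∑ a, X a (φ z) * pd a (fun w => ψ w l) (φ z)) y
      = divergence X (φ y)
        + ∑ a, X a (φ y) * pd a (fun w => Real.log |(jacobian ψ w).det|) (φ y) := by
  set x := φ y
  set J := jacobian ψ x
  set K := jacobian φ y
  have hψl (l : Fin n) : ContDiffAt ℝ 2 (fun w => ψ w l) x := contDiffAt_pi.1 hψ l
  have hJ (l a : Fin n) : DifferentiableAt ℝ (pd a (fun w => ψ w l)) x :=
    ((hψl l).pd a).differentiableAt one_ne_zero
  have hKJ (c a : Fin n) : ∑ l, K c l * J l a = if c = a then 1 else 0 := by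
    rw [← Matrix.mul_apply, mul_eq_one_comm.1 hinv, Matrix.one_apply]
  have hcomp (l : Fin n) :
      pd l (fun z => ∑ a, X a (φ z) * pd a (fun w => ψ w l) (φ z)) y
        = ∑ c, ∑ a, (pd c (X a) x * J l a + X a x * pd c (pd a (fun w => ψ w l)) x) * K c l := by
    rw [pd_comp (F := fun w => ∑ a, X a w * pd a (fun w => ψ w l) w)
      (DifferentiableAt.fun_sum fun a _ => (hX a).mul (hJ l a)) hφ]
    refine Finset.sum_congr rfl fun c _ => ?_
    rw [pd_sum (F := fun a w => X a w * pd a (fun w => ψ w l) w) (fun a _ => (hX a).mul (hJ l a)),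
      Finset.sum_mul]
    exact Finset.sum_congr rfl fun a _ => by rw [pd_mul (hX a) (hJ l a)]; rfl
  have hsymm (l c a : Fin n) : pd c (pd a (fun w => ψ w l)) x = pd a (pd c (fun w => ψ w l)) x :=
    pd_pd_comm (hψl l) c a
  simp only [divergence, hcomp, pd_log_abs_det_jacobian hψ hinv]
  calc _ = ∑ c, ∑ a, ∑ l,
          (pd c (X a) x * J l a + X a x * pd a (pd c (fun w => ψ w l)) x) * K c l := by
          rw [Finset.sum_comm]
          refine Finset.sum_congr rfl fun c _ => ?_
          rw [Finset.sum_comm]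
          exact Finset.sum_congr rfl fun a _ => Finset.sum_congr rfl fun l _ => by rw [hsymm]
    _ = ∑ c, ∑ a, pd c (X a) x * (∑ l, K c l * J l a)
          + ∑ a, X a x * ∑ c, ∑ l, K c l * pd a (pd c (fun w => ψ w l)) x := by
          simp only [add_mul, Finset.sum_add_distrib, Finset.mul_sum]
          congr 1
          · exact Finset.sum_congr rfl fun c _ => Finset.sum_congr rfl fun a _ =>
              Finset.sum_congr rfl fun l _ => by ring
          · rw [Finset.sum_comm]
            exact Finset.sum_congr rfl fun a _ => Finset.sum_congr rfl fun c _ =>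
              Finset.sum_congr rfl fun l _ => by ring
    _ = _ := by simp [hKJ]

theorem divergence_sum_mul_pd {S : Fin n → Fin n → (Fin n → ℝ) → ℝ} {f : (Fin n → ℝ) → ℝ}
    {x : Fin n → ℝ} (hS : ∀ a b, DifferentiableAt ℝ (S a b) x)
    (hf : ∀ b, DifferentiableAt ℝ (pd b f) x) :
    divergence (fun a w => ∑ b, S a b w * pd b f w) x
      = ∑ a, ∑ b, (pd a (S a b) x * pd b f x + S a b x * pd a (pd b f) x) := by
  refine Finset.sum_congr rfl fun a _ => ?_
  rw [pd_sum (F := fun b w => S a b w * pd b f w) fun b _ => (hS a b).mul (hf b)]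
  exact Finset.sum_congr rfl fun b _ => pd_mul (hS a b) (hf b) a

end Divergence

section SecondOrderOperator

variable {n : ℕ} (S : Fin n → Fin n → (Fin n → ℝ) → ℝ) (T : Fin n → (Fin n → ℝ) → ℝ)
  (R : (Fin n → ℝ) → ℝ)

theorem secondOrderOp_const_one (x : Fin n → ℝ) : secondOrderOp S T R (fun _ => 1) x = R x := by
  simp [secondOrderOp, pd_const]

theorem secondOrderOp_coord (k : Fin n) (x : Fin n → ℝ) :
    secondOrderOp S T R (fun z => z k) x = T k x + R x * x k := by
  simp [secondOrderOp, pd_coord, pd_const]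

theorem secondOrderOp_mul {f g : (Fin n → ℝ) → ℝ} {x : Fin n → ℝ}
    (hS : ∀ a b, S a b x = S b a x) (hf : ContDiffAt ℝ 2 f x) (hg : ContDiffAt ℝ 2 g x) :
    secondOrderOp S T R (fun z => f z * g z) x
      = secondOrderOp S T R f x * g x + f x * secondOrderOp S T R g x - R x * f x * g x
        + ∑ a, ∑ b, S a b x * pd a f x * pd b g x := by
  have hdf : ∀ᶠ z in 𝓝 x, DifferentiableAt ℝ f z :=
    (hf.eventually (by simp)).mono fun z hz => hz.differentiableAt two_ne_zero
  have hdg : ∀ᶠ z in 𝓝 x, DifferentiableAt ℝ g z :=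
    (hg.eventually (by simp)).mono fun z hz => hz.differentiableAt two_ne_zero
  have hpdf (b : Fin n) : DifferentiableAt ℝ (pd b f) x := (hf.pd b).differentiableAt one_ne_zero
  have hpdg (b : Fin n) : DifferentiableAt ℝ (pd b g) x := (hg.pd b).differentiableAt one_ne_zero
  have hpd2 (a b : Fin n) : pd a (pd b fun z => f z * g z) x
      = pd a (pd b f) x * g x + pd b f x * pd a g x
        + (pd a f x * pd b g x + f x * pd a (pd b g) x) := by
    have hev : pd b (fun z => f z * g z) =ᶠ[𝓝 x] fun z => pd b f z * g z + f z * pd b g z := by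
      filter_upwards [hdf, hdg] with z hfz hgz using pd_mul hfz hgz b
    rw [pd_congr hev,
      pd_add ((hpdf b).fun_mul hdg.self_of_nhds) (hdf.self_of_nhds.fun_mul (hpdg b)),
      pd_mul (hpdf b) hdg.self_of_nhds, pd_mul hdf.self_of_nhds (hpdg b)]
  have hcross : ∑ a, ∑ b, S a b x * (pd b f x * pd a g x)
      = ∑ a, ∑ b, S a b x * pd a f x * pd b g x := by
    rw [Finset.sum_comm]
    exact Finset.sum_congr rfl fun a _ => Finset.sum_congr rfl fun b _ => by rw [hS]; ring
  have hS2 : ∑ a, ∑ b, S a b x * pd a (pd b fun z => f z * g z) x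
      = (∑ a, ∑ b, S a b x * pd a (pd b f) x) * g x + f x * ∑ a, ∑ b, S a b x * pd a (pd b g) x
        + 2 * ∑ a, ∑ b, S a b x * pd a f x * pd b g x := by
    rw [← hcross, two_mul]
    nth_rewrite 2 [hcross]
    simp only [hpd2, Finset.mul_sum, Finset.sum_mul, ← Finset.sum_add_distrib]
    exact Finset.sum_congr rfl fun a _ => Finset.sum_congr rfl fun b _ => by ring
  have hT1 : ∑ a, T a x * pd a (fun z => f z * g z) x
      = (∑ a, T a x * pd a f x) * g x + f x * ∑ a, T a x * pd a g x := by
    simp only [pd_mul hdf.self_of_nhds hdg.self_of_nhds, Finset.mul_sum, Finset.sum_mul,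
      ← Finset.sum_add_distrib]
    exact Finset.sum_congr rfl fun a _ => by ring
  simp only [secondOrderOp, hS2, hT1]
  ring

end SecondOrderOperator

section Pullback

variable {n : ℕ}

def IsPullbackOp (V : Set (Fin n → ℝ)) (φ ψ : (Fin n → ℝ) → Fin n → ℝ)
    (S : Fin n → Fin n → (Fin n → ℝ) → ℝ) (T : Fin n → (Fin n → ℝ) → ℝ) (R : (Fin n → ℝ) → ℝ)
    (S' : Fin n → Fin n → (Fin n → ℝ) → ℝ) (T' : Fin n → (Fin n → ℝ) → ℝ)
    (R' : (Fin n → ℝ) → ℝ) : Prop :=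
  ∀ g : (Fin n → ℝ) → ℝ, ContDiffOn ℝ (⊤ : ℕ∞) g V → ∀ y ∈ V,
    secondOrderOp S T R (fun x => g (ψ x)) (φ y) = secondOrderOp S' T' R' g y

namespace IsPullbackOp

variable {V : Set (Fin n → ℝ)} {φ ψ : (Fin n → ℝ) → Fin n → ℝ}
  {S S' : Fin n → Fin n → (Fin n → ℝ) → ℝ} {T T' : Fin n → (Fin n → ℝ) → ℝ}
  {R R' : (Fin n → ℝ) → ℝ} {y : Fin n → ℝ}

theorem zerothCoeff_eq (h : IsPullbackOp V φ ψ S T R S' T' R') (hy : y ∈ V) : R' y = R (φ y) := by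
  simpa [secondOrderOp_const_one] using (h (fun _ => 1) contDiffOn_const y hy).symm

theorem firstCoeff_eq (h : IsPullbackOp V φ ψ S T R S' T' R') (hy : y ∈ V) (hψφ : ψ (φ y) = y)
    (k : Fin n) :
    T' k y = 1 / 2 * ∑ a, ∑ b, S a b (φ y) * pd a (pd b fun x => ψ x k) (φ y)
      + ∑ a, T a (φ y) * pd a (fun x => ψ x k) (φ y) := by
  have hk := h _ (contDiff_apply ℝ ℝ k).contDiffOn y hy
  rw [secondOrderOp_coord, h.zerothCoeff_eq hy] at hk
  simp only [secondOrderOp, hψφ] at hk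
  linarith

theorem secondCoeff_eq (h : IsPullbackOp V φ ψ S T R S' T' R') (hy : y ∈ V) (hψφ : ψ (φ y) = y)
    (hψ : ContDiffAt ℝ 2 ψ (φ y)) (hS : ∀ a b, S a b (φ y) = S b a (φ y))
    (hS' : ∀ k l, S' k l y = S' l k y) (k l : Fin n) :
    S' k l y
      = ∑ a, ∑ b, S a b (φ y) * pd a (fun x => ψ x k) (φ y) * pd b (fun x => ψ x l) (φ y) := by
  have hcoord (m : Fin n) {N : WithTop ℕ∞} : ContDiff ℝ N fun z : Fin n → ℝ => z m :=
    contDiff_apply ℝ ℝ m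
  -- for `g = y_k y_l` the product rule reduces both sides to their principal symbols
  have hkl := h _ ((hcoord k).mul (hcoord l)).contDiffOn y hy
  rw [secondOrderOp_mul S T R hS (contDiffAt_pi.1 hψ k) (contDiffAt_pi.1 hψ l),
    secondOrderOp_mul S' T' R' hS' (hcoord k).contDiffAt (hcoord l).contDiffAt,
    h _ (hcoord k).contDiffOn y hy, h _ (hcoord l).contDiffOn y hy, h.zerothCoeff_eq hy, hψφ] at hkl
  simp only [pd_coord] at hkl
  simpa [hS' l k] using hkl.symm

end IsPullbackOp

end Pullback

theorem subSymbol_pullback_eq {n : ℕ} {φ ψ : (Fin n → ℝ) → Fin n → ℝ}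
    {S S' : Fin n → Fin n → (Fin n → ℝ) → ℝ} {T T' : Fin n → (Fin n → ℝ) → ℝ}
    {y : Fin n → ℝ} {k : Fin n}
    (hφ : DifferentiableAt ℝ φ y) (hψ : ContDiffAt ℝ 2 ψ (φ y))
    (hinv : jacobian ψ (φ y) * jacobian φ y = 1)
    (hS : ∀ a b, DifferentiableAt ℝ (S a b) (φ y)) (hSsym : ∀ a b, S a b (φ y) = S b a (φ y))
    (hS' : ∀ l, S' l k =ᶠ[𝓝 y] fun z =>
      ∑ a, ∑ b, S a b (φ z) * pd a (fun x => ψ x l) (φ z) * pd b (fun x => ψ x k) (φ z))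
    (hT' : T' k y = 1 / 2 * ∑ a, ∑ b, S a b (φ y) * pd a (pd b fun x => ψ x k) (φ y)
      + ∑ a, T a (φ y) * pd a (fun x => ψ x k) (φ y)) :
    subSymbol S' T' k y
      = ∑ a, (subSymbol S T a (φ y)
          + ∑ b, S a b (φ y) * pd b (fun x => Real.log |(jacobian ψ x).det|) (φ y))
        * pd a (fun x => ψ x k) (φ y) := by
  set X : Fin n → (Fin n → ℝ) → ℝ := fun a w => ∑ b, S a b w * pd b (fun v => ψ v k) w
  have hψk (b : Fin n) : DifferentiableAt ℝ (pd b fun v => ψ v k) (φ y) :=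
    ((contDiffAt_pi.1 hψ k).pd b).differentiableAt one_ne_zero
  have hX (a : Fin n) : DifferentiableAt ℝ (X a) (φ y) :=
    DifferentiableAt.fun_sum fun b _ => (hS a b).mul (hψk b)
  have hS'X : subSymbol S' T' k y
      = divergence (fun l z => ∑ a, X a (φ z) * pd a (fun w => ψ w l) (φ z)) y - 2 * T' k y := by
    refine congrArg (· - _) (Finset.sum_congr rfl fun l _ => pd_congr ((hS' l).trans ?_) l)
    refine Eventually.of_forall fun z => Finset.sum_congr rfl fun a _ => ?_
    simp only [X, Finset.sum_mul]
    exact Finset.sum_congr rfl fun b _ => by ring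
  rw [hS'X, divergence_pullback hφ hψ hinv hX, divergence_sum_mul_pd hS hψk, hT']
  have hdivS : ∑ a, ∑ b, pd a (S a b) (φ y) * pd b (fun v => ψ v k) (φ y)
      = ∑ a, (∑ b, pd b (S b a) (φ y)) * pd a (fun v => ψ v k) (φ y) := by
    rw [Finset.sum_comm]
    simp only [Finset.sum_mul]
  have hlogS : ∑ a, (∑ b, S a b (φ y) * pd b (fun v => ψ v k) (φ y))
        * pd a (fun w => Real.log |(jacobian ψ w).det|) (φ y)
      = ∑ a, (∑ b, S a b (φ y) * pd b (fun w => Real.log |(jacobian ψ w).det|) (φ y))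
        * pd a (fun v => ψ v k) (φ y) := by
    simp only [Finset.sum_mul]
    rw [Finset.sum_comm]
    exact Finset.sum_congr rfl fun a _ => Finset.sum_congr rfl fun b _ => by rw [hSsym]; ring
  simp only [subSymbol, X, Finset.sum_add_distrib, add_mul, sub_mul, Finset.sum_sub_distrib, hdivS,
    hlogS]
  have h2T : ∑ a, 2 * T a (φ y) * pd a (fun v => ψ v k) (φ y)
      = 2 * ∑ a, T a (φ y) * pd a (fun v => ψ v k) (φ y) := by
    simp only [Finset.mul_sum, mul_assoc]
  linear_combination h2T

theorem subSymbol_transforms_as_upper_connection_general {n : ℕ} (U V : Set (Fin n → ℝ))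
    (hU : IsOpen U) (hV : IsOpen V)
    (φ ψ : (Fin n → ℝ) → (Fin n → ℝ))
    (hφ : ContDiffOn ℝ (⊤ : ℕ∞) φ V) (hψ : ContDiffOn ℝ (⊤ : ℕ∞) ψ U)
    (hφV : Set.MapsTo φ V U)
    (hψφ : ∀ y ∈ V, ψ (φ y) = y)
    (S : Fin n → Fin n → (Fin n → ℝ) → ℝ)
    (T : Fin n → (Fin n → ℝ) → ℝ) (R : (Fin n → ℝ) → ℝ)
    (hS : ∀ a b, ContDiffOn ℝ (⊤ : ℕ∞) (S a b) U) (hSsym : ∀ a b, S a b = S b a)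
    -- `S'`, `T'`, `R'` are the coefficients of the pullback operator `Δ'g = (Δ(g∘ψ))∘φ`:
    (S' : Fin n → Fin n → (Fin n → ℝ) → ℝ)
    (T' : Fin n → (Fin n → ℝ) → ℝ) (R' : (Fin n → ℝ) → ℝ)
    (hS'sym : ∀ k l, S' k l = S' l k)
    (hpull : ∀ g : (Fin n → ℝ) → ℝ, ContDiffOn ℝ (⊤ : ℕ∞) g V → ∀ y ∈ V,
      secondOrderOp S T R (fun x => g (ψ x)) (φ y) = secondOrderOp S' T' R' g y)
    (y : Fin n → ℝ) (hy : y ∈ V) (k : Fin n) :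
    subSymbol S' T' k y
    = ∑ a, (subSymbol S T a (φ y)
          + ∑ b, S a b (φ y) * pd b (fun x => Real.log |(jacobian ψ x).det|) (φ y))
        * pd a (fun x => ψ x k) (φ y) := by
  have hψ2 {z : Fin n → ℝ} (hz : z ∈ V) : ContDiffAt ℝ 2 ψ (φ z) :=
    (hψ.contDiffAt (hU.mem_nhds (hφV hz))).of_le (WithTop.coe_le_coe.2 le_top)
  have hφy : DifferentiableAt ℝ φ y :=
    (hφ.contDiffAt (hV.mem_nhds hy)).differentiableAt (by simp)
  have hinv : jacobian ψ (φ y) * jacobian φ y = 1 := by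
    rw [← jacobian_comp ((hψ2 hy).differentiableAt two_ne_zero) hφy,
      jacobian_congr (Filter.eventually_of_mem (hV.mem_nhds hy) hψφ), jacobian_id]
  refine subSymbol_pullback_eq hφy (hψ2 hy) hinv
    (fun a b => ((hS a b).contDiffAt (hU.mem_nhds (hφV hy))).differentiableAt (by simp))
    (fun a b => congrFun (hSsym a b) _) (fun l => ?_)
    (IsPullbackOp.firstCoeff_eq hpull hy (hψφ y hy) k)
  filter_upwards [hV.mem_nhds hy] with z hz
  exact IsPullbackOp.secondCoeff_eq hpull hz (hψφ z hz) (hψ2 hz)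
    (fun a b => congrFun (hSsym a b) _) (fun k l => congrFun (hS'sym k l) z) l k

/-- under the pullback of a second-order operator by a `C^∞`
diffeomorphism `φ : V → U` with inverse `ψ`, the subprincipal symbol transforms as an
upper connection in the bundle of volume forms:
`γ'^k = Σ_a [γ^a + Σ_b S^{ab} ∂_b(ln|det Dψ|)] ∘ φ · ∂_aψ^k ∘ φ`. -/
theorem subSymbol_transforms_as_upper_connection {n : ℕ} (U V : Set (Fin n → ℝ))
    (hU : IsOpen U) (hV : IsOpen V)
    (φ ψ : (Fin n → ℝ) → (Fin n → ℝ))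
    (hφ : ContDiffOn ℝ (⊤ : ℕ∞) φ V) (hψ : ContDiffOn ℝ (⊤ : ℕ∞) ψ U)
    (hφV : Set.MapsTo φ V U) (hψU : Set.MapsTo ψ U V)
    (hψφ : ∀ y ∈ V, ψ (φ y) = y) (hφψ : ∀ x ∈ U, φ (ψ x) = x)
    (S : Fin n → Fin n → (Fin n → ℝ) → ℝ)
    (T : Fin n → (Fin n → ℝ) → ℝ) (R : (Fin n → ℝ) → ℝ)
    (hS : ∀ a b, ContDiffOn ℝ (⊤ : ℕ∞) (S a b) U) (hSsym : ∀ a b, S a b = S b a)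
    (hT : ∀ a, ContDiffOn ℝ (⊤ : ℕ∞) (T a) U) (hR : ContDiffOn ℝ (⊤ : ℕ∞) R U)
    -- `S'`, `T'`, `R'` are the coefficients of the pullback operator `Δ'g = (Δ(g∘ψ))∘φ`:
    (S' : Fin n → Fin n → (Fin n → ℝ) → ℝ)
    (T' : Fin n → (Fin n → ℝ) → ℝ) (R' : (Fin n → ℝ) → ℝ)
    (hS' : ∀ k l, ContDiffOn ℝ (⊤ : ℕ∞) (S' k l) V) (hS'sym : ∀ k l, S' k l = S' l k)
    (hT' : ∀ k, ContDiffOn ℝ (⊤ : ℕ∞) (T' k) V) (hR' : ContDiffOn ℝ (⊤ : ℕ∞) R' V)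
    (hpull : ∀ g : (Fin n → ℝ) → ℝ, ContDiffOn ℝ (⊤ : ℕ∞) g V → ∀ y ∈ V,
      secondOrderOp S T R (fun x => g (ψ x)) (φ y) = secondOrderOp S' T' R' g y)
    (y : Fin n → ℝ) (hy : y ∈ V) (k : Fin n) :
    subSymbol S' T' k y
    = ∑ a, (subSymbol S T a (φ y)
          + ∑ b, S a b (φ y) * pd b (fun x => Real.log |(jacobian ψ x).det|) (φ y))
        * pd a (fun x => ψ x k) (φ y) :=
  subSymbol_transforms_as_upper_connection_general U V hU hV φ ψ hφ hψ hφV hψφ S T R hS hSsym S' T'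
    R' hS'sym hpull y hy k
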